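/- For 0 < β < 1, the convolution of the Gaussian e^{−h²} with the Riesz kernel |·|^{−β} has the asymptotic behavior ∫_{−∞}^{∞} e^{−h²} |Z − h|^{−β} dh ∼ √π · Z^{−β} as Z → +∞; i.e., Z^β ∫_{−∞}^{∞} e^{−h²} |Z−h|^{−β} dh → √π. -/

import Mathlib

open Real MeasureTheory Filter Set

/-!
After rescaling, `Z ^ β * |Z - h| ^ (-β) = |1 - h / Z| ^ (-β) → 1` for each fixed `h`, so the
limit is `∫ exp (-h ^ 2) = √π` by dominated convergence, except near the singularity `h = Z`.
Split the kernel `|x| ^ (-β)` into its part on `[-1, 1]`, which is integrable since `β < 1`, and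
its part outside, which is at most `1`. Away from the singularity `Z ^ β * |Z - h| ^ (-β)` is
dominated by `1 + |h|`; near it `h ≥ Z - 1`, so the Gaussian factor is at most `exp (2 - Z)`,
which beats `Z ^ β`.
-/

lemma integrable_exp_neg_sq : Integrable fun h : ℝ => exp (-h ^ 2) := by
  simpa using integrable_exp_neg_mul_sq one_pos

namespace RieszKernel

noncomputable def near (β : ℝ) : ℝ → ℝ := (Icc (-1) 1).indicator fun x => |x| ^ (-β)

noncomputable def far (β : ℝ) : ℝ → ℝ := (Icc (-1) 1)ᶜ.indicator fun x => |x| ^ (-β)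

variable {β : ℝ}

lemma near_add_far (x : ℝ) : near β x + far β x = |x| ^ (-β) :=
  indicator_self_add_compl_apply _ _ x

lemma near_nonneg (x : ℝ) : 0 ≤ near β x :=
  indicator_nonneg (fun _ _ => by positivity) x

lemma far_nonneg (x : ℝ) : 0 ≤ far β x :=
  indicator_nonneg (fun _ _ => by positivity) x

@[fun_prop]
lemma measurable_far : Measurable (far β) :=
  (by fun_prop : Measurable fun x : ℝ => |x| ^ (-β)).indicator measurableSet_Icc.compl

lemma far_le_one (hβ : 0 ≤ β) (x : ℝ) : far β x ≤ 1 := by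
  by_cases hx : x ∈ Icc (-1) 1
  · simp [far, indicator_of_notMem (notMem_compl_iff.mpr hx)]
  · rw [far, indicator_of_mem (mem_compl hx)]
    exact rpow_le_one_of_one_le_of_nonpos (not_le.mp fun h => hx (abs_le.mp h)).le (by linarith)

lemma integrable_near (hβ : β < 1) : Integrable (near β) := by
  have hloc : LocallyIntegrable (fun x : ℝ => |x| ^ (-β)) :=
    locallyIntegrable_of_norm_le_rpow (C := 1) (α := β) (by simp) (by simpa using hβ)
      (ae_of_all _ fun x => by simp [abs_of_nonneg (rpow_nonneg (abs_nonneg x) _)])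
      (by fun_prop : Measurable fun x : ℝ => |x| ^ (-β)).aestronglyMeasurable
  exact (hloc.integrableOn_isCompact isCompact_Icc).integrable_indicator measurableSet_Icc

lemma rpow_mul_abs_sub_rpow_neg_le (hβ0 : 0 ≤ β) (hβ1 : β ≤ 1) {Z h : ℝ} (hZ : 0 ≤ Z)
    (hZh : 1 ≤ |Z - h|) : Z ^ β * |Z - h| ^ (-β) ≤ 1 + |h| := by
  have hpos : 0 < |Z - h| := by linarith
  have hratio : Z / |Z - h| ≤ 1 + |h| := by
    rw [div_le_iff₀ hpos]
    nlinarith [abs_sub_abs_le_abs_sub Z h, abs_of_nonneg hZ, abs_nonneg h]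
  calc Z ^ β * |Z - h| ^ (-β) = (Z / |Z - h|) ^ β := by
        rw [rpow_neg hpos.le, div_rpow hZ hpos.le, div_eq_mul_inv]
    _ ≤ (1 + |h|) ^ β := by gcongr
    _ ≤ (1 + |h|) ^ (1 : ℝ) := by
        gcongr
        · linarith [abs_nonneg h]
    _ = 1 + |h| := rpow_one _

lemma tendsto_rpow_mul_abs_sub_rpow_neg (h : ℝ) :
    Tendsto (fun Z : ℝ => Z ^ β * |Z - h| ^ (-β)) atTop (nhds 1) := by
  have hratio : Tendsto (fun Z : ℝ => |1 - h / Z|) atTop (nhds 1) := by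
    simpa using
      ((tendsto_const_nhds (x := (1 : ℝ))).sub (tendsto_const_nhds.div_atTop tendsto_id)).abs
  have hlim : Tendsto (fun Z : ℝ => |1 - h / Z| ^ (-β)) atTop (nhds 1) := by
    simpa using hratio.rpow_const (p := -β) (by simp)
  refine hlim.congr' ?_
  filter_upwards [eventually_gt_atTop 0] with Z hZ
  rw [show 1 - h / Z = (Z - h) / Z by field_simp, abs_div, abs_of_pos hZ,
    div_rpow (abs_nonneg _) hZ.le, rpow_neg hZ.le, div_eq_mul_inv, inv_inv, mul_comm]

lemma tendsto_rpow_mul_far_sub (h : ℝ) :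
    Tendsto (fun Z : ℝ => Z ^ β * far β (Z - h)) atTop (nhds 1) := by
  refine (tendsto_rpow_mul_abs_sub_rpow_neg (β := β) h).congr' ?_
  filter_upwards [eventually_gt_atTop (h + 1)] with Z hZ
  rw [far, indicator_of_mem (fun hmem => by linarith [hmem.2])]

lemma tendsto_integral_mul_rpow_mul_far {g : ℝ → ℝ} (hβ0 : 0 ≤ β) (hβ1 : β ≤ 1)
    (hg : Integrable g) (hg' : Integrable fun h => h * g h) :
    Tendsto (fun Z => ∫ h, g h * (Z ^ β * far β (Z - h))) atTop (nhds (∫ h, g h)) := by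
  refine tendsto_integral_filter_of_dominated_convergence (fun h => ‖g h‖ + ‖h * g h‖)
    (Eventually.of_forall fun Z => hg.aestronglyMeasurable.mul
      (by fun_prop : Measurable fun h => Z ^ β * far β (Z - h)).aestronglyMeasurable) ?_
    (hg.norm.add hg'.norm) (ae_of_all _ fun h => by
      simpa using (tendsto_rpow_mul_far_sub h).const_mul (g h))
  filter_upwards [eventually_ge_atTop 0] with Z hZ
  refine ae_of_all _ fun h => ?_
  have hbound : Z ^ β * far β (Z - h) ≤ 1 + |h| := by
    by_cases hmem : Z - h ∈ Icc (-1) 1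
    · rw [far, indicator_of_notMem (notMem_compl_iff.mpr hmem), mul_zero]; positivity
    · rw [far, indicator_of_mem (mem_compl hmem)]
      exact rpow_mul_abs_sub_rpow_neg_le hβ0 hβ1 hZ (not_le.mp fun h => hmem (abs_le.mp h)).le
  have hnonneg : 0 ≤ Z ^ β * far β (Z - h) := mul_nonneg (by positivity) (far_nonneg _)
  rw [norm_mul, Real.norm_of_nonneg hnonneg]
  calc ‖g h‖ * (Z ^ β * far β (Z - h)) ≤ ‖g h‖ * (1 + |h|) := by gcongr
    _ = ‖g h‖ + ‖h * g h‖ := by rw [norm_mul, Real.norm_eq_abs, Real.norm_eq_abs]; ring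

lemma integrable_exp_neg_sq_mul_near (hβ : β < 1) (Z : ℝ) :
    Integrable fun h => exp (-h ^ 2) * near β (Z - h) :=
  ((integrable_near hβ).comp_sub_left Z).bdd_mul (c := 1) (by fun_prop)
    (ae_of_all _ fun h => by simpa using sq_nonneg h)

lemma exp_neg_sq_mul_near_le {Z : ℝ} (hZ : 1 ≤ Z) (h : ℝ) :
    exp (-h ^ 2) * near β (Z - h) ≤ exp (2 - Z) * near β (Z - h) := by
  by_cases hmem : Z - h ∈ Icc (-1) 1
  · gcongr
    · exact near_nonneg _
    -- on the support `h ≥ Z - 1 ≥ 0`, and `(Z - 1) ^ 2 ≥ Z - 2`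
    · nlinarith [hmem.2]
  · simp [near, indicator_of_notMem hmem]

lemma integral_exp_neg_sq_mul_near_le (hβ : β < 1) {Z : ℝ} (hZ : 1 ≤ Z) :
    ∫ h, exp (-h ^ 2) * near β (Z - h) ≤ exp (2 - Z) * ∫ x, near β x := by
  calc ∫ h, exp (-h ^ 2) * near β (Z - h) ≤ ∫ h, exp (2 - Z) * near β (Z - h) :=
        integral_mono (integrable_exp_neg_sq_mul_near hβ Z)
          (((integrable_near hβ).comp_sub_left Z).const_mul _) (exp_neg_sq_mul_near_le hZ)
    _ = exp (2 - Z) * ∫ x, near β x := by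
        rw [integral_const_mul, integral_sub_left_eq_self (near β) volume Z]

lemma tendsto_rpow_mul_integral_exp_neg_sq_mul_near (hβ : β < 1) :
    Tendsto (fun Z : ℝ => Z ^ β * ∫ h, exp (-h ^ 2) * near β (Z - h)) atTop (nhds 0) := by
  have hdecay : Tendsto (fun Z : ℝ => Z ^ β * exp (-1 * Z) * (exp 2 * ∫ x, near β x))
      atTop (nhds 0) := by
    simpa using (tendsto_rpow_mul_exp_neg_mul_atTop_nhds_zero β 1 one_pos).mul_const
      (exp 2 * ∫ x, near β x)
  refine squeeze_zero' ?_ ?_ hdecay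
  · filter_upwards [eventually_ge_atTop 0] with Z hZ
    exact mul_nonneg (by positivity)
      (integral_nonneg fun h => mul_nonneg (by positivity) (near_nonneg _))
  · filter_upwards [eventually_ge_atTop 1] with Z hZ
    calc Z ^ β * ∫ h, exp (-h ^ 2) * near β (Z - h)
        ≤ Z ^ β * (exp (2 - Z) * ∫ x, near β x) := by
          gcongr
          exact integral_exp_neg_sq_mul_near_le hβ hZ
      _ = Z ^ β * exp (-1 * Z) * (exp 2 * ∫ x, near β x) := by
          rw [sub_eq_add_neg, exp_add]; ring_nf

lemma integrable_exp_neg_sq_mul_far (hβ : 0 ≤ β) (Z : ℝ) :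
    Integrable fun h => exp (-h ^ 2) * far β (Z - h) :=
  integrable_exp_neg_sq.mul_bdd (c := 1)
    (by fun_prop : Measurable fun h => far β (Z - h)).aestronglyMeasurable
    (ae_of_all _ fun h => by
      rw [Real.norm_of_nonneg (far_nonneg _)]; exact far_le_one hβ _)

end RieszKernel

open RieszKernel

theorem gaussian_riesz_convolution_asymptotic (β : ℝ) (hβ0 : 0 < β) (hβ1 : β < 1) :
    Tendsto (fun Z : ℝ => Z ^ β * ∫ h : ℝ, Real.exp (-h ^ 2) * |Z - h| ^ (-β))
      atTop (nhds (Real.sqrt π)) := by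
  have hsplit : ∀ Z : ℝ, Z ^ β * ∫ h : ℝ, exp (-h ^ 2) * |Z - h| ^ (-β) =
      Z ^ β * (∫ h, exp (-h ^ 2) * near β (Z - h)) +
        ∫ h, exp (-h ^ 2) * (Z ^ β * far β (Z - h)) := by
    intro Z
    simp_rw [← near_add_far (β := β), mul_add]
    rw [integral_add (integrable_exp_neg_sq_mul_near hβ1 Z)
      (integrable_exp_neg_sq_mul_far hβ0.le Z), mul_add, ← integral_const_mul (Z ^ β)
      fun h => exp (-h ^ 2) * far β (Z - h)]
    simp only [mul_left_comm]
  have hgauss : ∫ h : ℝ, exp (-h ^ 2) = √π := by simpa using integral_gaussian 1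
  have hfar := tendsto_integral_mul_rpow_mul_far hβ0.le hβ1.le integrable_exp_neg_sq
    (by simpa using integrable_mul_exp_neg_mul_sq one_pos)
  simpa [hsplit, hgauss] using (tendsto_rpow_mul_integral_exp_neg_sq_mul_near hβ1).add hfar
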